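/- For F ∈ {CR, SO}, let (r,m) be a point of the system of the protocol P^intent in the context γ_intent(F), let i be an agent with front_i(r,m) = 1, and let (l,l') be a move with l in the cyclic interval [next(r,m), lane_i(r,m)). Then (l,l') ∈ Pos_i(r,m) if and only if ¬K_i¬(∃ j ∈ Ag: front_j ∧ lane_j = l ∧ intent_j = l' ∧ going_j) holds at (r,m). -/

import Mathlib

/-!
Under crash failures and sending omissions receivers never fail, and front agents always reach
one another, so at every time `m ≥ 1` all front agents hold the same memory `M`: the moves of the
front agents whose transmitters worked. For a lane `l` visited before `lane_i`, the stage of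
`Pos_i` preceding `l` is therefore exactly the set against which the front agent of lane `l`
tests its own move. If `(l, l') ∈ Pos_i`, a run in which every lane receives a single agent at
once, exactly the messages in `M` get through, and lane `l` holds an agent with move `(l, l')`,
looks the same to `i` and that agent goes. Conversely, at any point `i` cannot tell apart from
`(r, m)`, a going front agent of lane `l` with intent `l'` heard `M` and passed that test, which is
what membership of `(l, l')` in `Pos_i` requires.
-/

open scoped Classical

noncomputable section

namespace Inter

/-- Actions available to each agent. -/
inductive Act where
  | go
  | noop
deriving DecidableEq

/-- A move through the intersection: an incoming lane paired with an outgoing lane. -/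
abbrev Move (kin kout : ℕ) := Fin kin × Fin kout

/-- An adversary: a conflict-free arrival schedule, a transmission environment and
transmitter/receiver failure functions. -/
structure Adversary (kin kout : ℕ) where
  arrive : ℕ → ℕ × Fin kin × Fin kout
  conflictFree : ∀ i j : ℕ, i ≠ j → (arrive i).1 = (arrive j).1 →
    (arrive i).2.1 ≠ (arrive j).2.1
  T : Set ((Fin kin × ℕ) × (Fin kin × ℕ))
  T_front : ∀ l l' : Fin kin, ((l, 0), (l', 0)) ∈ T
  Ft : ℕ → ℕ → Bool
  Fr : ℕ → ℕ → Bool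

/-- The lane component of a sensor reading: an incoming lane, ⊥ (not yet arrived),
or ⊤ (departed). -/
inductive LaneStatus (kin : ℕ) where
  | inLane (l : Fin kin)
  | notArrived
  | finished

/-- The minimal sensor reading: front, lane and intent. -/
structure Reading (kin kout : ℕ) where
  front : Prop
  lane : LaneStatus kin
  intent : Fin kout

/-- Environment states record the adversary, the time, a queue for each incoming lane
and the set of departed agents. -/
structure EnvState (kin kout : ℕ) where
  adv : Adversary kin kout
  time : ℕ
  queue : Fin kin → List ℕ
  done : Set ℕ

/-- Local states: a memory state together with a sensor reading
(the minimal reading plus possibly extra sensor information). -/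
abbrev LState (kin kout : ℕ) (Mem Extra : Type*) := Mem × Reading kin kout × Extra

/-- Global states: an environment state and local states for all agents. -/
abbrev GState (kin kout : ℕ) (Mem Extra : Type*) :=
  EnvState kin kout × (ℕ → LState kin kout Mem Extra)

/-- A run. -/
abbrev Run (kin kout : ℕ) (Mem Extra : Type*) := ℕ → GState kin kout Mem Extra

/-- An action protocol maps each agent's local state to an action. -/
abbrev Prot (kin kout : ℕ) (Mem Extra : Type*) := ℕ → LState kin kout Mem Extra → Act

variable {kin kout : ℕ} {Mem Extra Msg : Type*}

/-- Agent `i` is at the front of some queue. -/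
def isFront (e : EnvState kin kout) (i : ℕ) : Prop :=
  ∃ l : Fin kin, (e.queue l).head? = some i

/-- The (lane, position) of agent `i`, if it is in some queue. -/
def posAt (e : EnvState kin kout) (i : ℕ) : Option (Fin kin × ℕ) :=
  if h : ∃ l : Fin kin, i ∈ e.queue l then some (h.choose, (e.queue h.choose).idxOf i)
  else none

/-- The intended departure lane of agent `i`, as given by the arrival schedule. -/
def intentOf (e : EnvState kin kout) (i : ℕ) : Fin kout := (e.adv.arrive i).2.2

/-- The move `(lane_i, intent_i)` of agent `i`, if it is in some queue. -/
def moveAt (e : EnvState kin kout) (i : ℕ) : Option (Move kin kout) :=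
  (posAt e i).map (fun p => (p.1, intentOf e i))

/-- The minimal sensor reading of agent `i` in environment state `e`. -/
def minimalReading (e : EnvState kin kout) (i : ℕ) : Reading kin kout where
  front := isFront e i
  lane :=
    if h : ∃ l : Fin kin, i ∈ e.queue l then LaneStatus.inLane h.choose
    else if i ∈ e.done then LaneStatus.finished else LaneStatus.notArrived
  intent := intentOf e i

/-- An information-exchange protocol: initial memories, extra sensor information,
a message function and a memory-update function. -/
structure IEP (kin kout : ℕ) (Mem Extra Msg : Type*) where
  initMem : ℕ → Mem
  extra : EnvState kin kout → ℕ → Extra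
  msg : ℕ → LState kin kout Mem Extra → Act → Reading kin kout × Extra → Option Msg
  upd : ℕ → LState kin kout Mem Extra → Act → Set Msg → Mem

/-- One round of the system: agents act, queues are updated (dequeues for agents that go,
enqueues for new arrivals), new sensor readings are taken, messages are broadcast and
received subject to the transmission environment and the failure functions, and memories
are updated. -/
def step (E : IEP kin kout Mem Extra Msg) (P : Prot kin kout Mem Extra)
    (g : GState kin kout Mem Extra) : GState kin kout Mem Extra :=
  let e := g.1
  let act : ℕ → Act := fun i => P i (g.2 i)
  let q' : Fin kin → List ℕ := fun l =>
    let q1 := match (e.queue l).head? with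
      | some i => if act i = Act.go then (e.queue l).tail else e.queue l
      | none => e.queue l
    if h : ∃ i l', e.adv.arrive i = (e.time + 1, l, l') then q1 ++ [h.choose] else q1
  let done' : Set ℕ := e.done ∪ {i | isFront e i ∧ act i = Act.go}
  let e' : EnvState kin kout := ⟨e.adv, e.time + 1, q', done'⟩
  let sens : ℕ → Reading kin kout × Extra := fun i => (minimalReading e' i, E.extra e' i)
  let rcv : ℕ → Set Msg := fun i =>
    if e.adv.Fr e.time i = true ∧ (posAt e' i).isSome = true then
      {m | ∃ j pj pi, E.msg j (g.2 j) (act j) (sens j) = some m ∧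
            e.adv.Ft e.time j = true ∧
            posAt e' j = some pj ∧ posAt e' i = some pi ∧ (pj, pi) ∈ e.adv.T}
    else ∅
  (e', fun i => (E.upd i (g.2 i) (act i) (rcv i), sens i))

/-- An intersection context: an information-exchange protocol together with an
adversary model. -/
structure Ctx (kin kout : ℕ) (Mem Extra Msg : Type*) where
  iep : IEP kin kout Mem Extra Msg
  adv : Set (Adversary kin kout)

/-- Initial global states: time 0, empty queues, no departed agents, an adversary
from the adversary model, and initial local states. -/
def Init (C : Ctx kin kout Mem Extra Msg) (g : GState kin kout Mem Extra) : Prop :=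
  g.1.adv ∈ C.adv ∧ g.1.time = 0 ∧ (∀ l, g.1.queue l = []) ∧ g.1.done = ∅ ∧
  ∀ i, g.2 i = (C.iep.initMem i, minimalReading g.1 i, C.iep.extra g.1 i)

/-- The interpreted system `I_{γ,P}`: the set of runs of protocol `P` in context `γ`. -/
def Runs (C : Ctx kin kout Mem Extra Msg) (P : Prot kin kout Mem Extra) :
    Set (Run kin kout Mem Extra) :=
  {r | Init C (r 0) ∧ ∀ m, r (m + 1) = step C.iep P (r m)}

/-- `front_i` holds at the point `(r,m)`. -/
def frontAt (r : Run kin kout Mem Extra) (m i : ℕ) : Prop := isFront (r m).1 i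

/-- `going_i` abbreviates `front_i ∧ ◯¬front_i`. -/
def goingAt (r : Run kin kout Mem Extra) (m i : ℕ) : Prop :=
  frontAt r m i ∧ ¬ frontAt r (m + 1) i

/-- `GO(r,m)`: the set of agents that go through the intersection in round `m+1`. -/
def GOs (r : Run kin kout Mem Extra) (m : ℕ) : Set ℕ := {i | goingAt r m i}

/-- Validity: an agent goes through the intersection only from the front of its queue. -/
def ValidityP (C : Ctx kin kout Mem Extra Msg) (P : Prot kin kout Mem Extra) : Prop :=
  ∀ r ∈ Runs C P, ∀ m i, goingAt r m i → frontAt r m i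

/-- Safety: agents that go simultaneously have compatible moves. -/
def SafetyP (O : Move kin kout → Move kin kout → Prop)
    (C : Ctx kin kout Mem Extra Msg) (P : Prot kin kout Mem Extra) : Prop :=
  ∀ r ∈ Runs C P, ∀ m i j, i ≠ j → goingAt r m i → goingAt r m j →
    ∀ mi mj, moveAt (r m).1 i = some mi → moveAt (r m).1 j = some mj → O mi mj

/-- Liveness: every agent at the front of a queue eventually goes. -/
def LivenessP (C : Ctx kin kout Mem Extra Msg) (P : Prot kin kout Mem Extra) : Prop :=
  ∀ r ∈ Runs C P, ∀ m i, frontAt r m i → ∃ m' ≥ m, goingAt r m' i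

/-- An intersection protocol: an action protocol satisfying Validity, Safety and Liveness. -/
def IsIntersectionProtocol (O : Move kin kout → Move kin kout → Prop)
    (C : Ctx kin kout Mem Extra Msg) (P : Prot kin kout Mem Extra) : Prop :=
  ValidityP C P ∧ SafetyP O C P ∧ LivenessP C P

/-- `safe-to-go_i` at `(r,m)`: `i` is at the front of its queue (position 0) and the moves
of the agents in `GO(r,m) ∪ {i}` are pairwise compatible. -/
def safeToGo (O : Move kin kout → Move kin kout → Prop)
    (r : Run kin kout Mem Extra) (m i : ℕ) : Prop :=
  (∃ p, posAt (r m).1 i = some p ∧ p.2 = 0) ∧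
  ∀ j ∈ GOs r m ∪ {i}, ∀ k ∈ GOs r m ∪ {i}, j ≠ k →
    ∀ mj mk, moveAt (r m).1 j = some mj → moveAt (r m).1 k = some mk → O mj mk

/-- `P` has unnecessary waiting with respect to `γ`. -/
def UnnecessaryWaiting (O : Move kin kout → Move kin kout → Prop)
    (C : Ctx kin kout Mem Extra Msg) (P : Prot kin kout Mem Extra) : Prop :=
  ∃ r ∈ Runs C P, ∃ m i, safeToGo O r m i ∧ i ∉ GOs r m

/-- The time at which agent `i` goes through the intersection in run `r` (∞ if never). -/
def gotime (r : Run kin kout Mem Extra) (i : ℕ) : ℕ∞ :=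
  sInf {n : ℕ∞ | ∃ m : ℕ, goingAt r m i ∧ n = (m : ℕ∞)}

/-- `P` dominates `P'`: on all corresponding runs, every agent goes at least as early. -/
def Dominates (C : Ctx kin kout Mem Extra Msg) (P P' : Prot kin kout Mem Extra) : Prop :=
  ∀ r ∈ Runs C P, ∀ r' ∈ Runs C P', r 0 = r' 0 → ∀ i, gotime r i ≤ gotime r' i

def StrictDominates (C : Ctx kin kout Mem Extra Msg) (P P' : Prot kin kout Mem Extra) : Prop :=
  Dominates C P P' ∧ ¬ Dominates C P' P

/-- `P` is optimal: no intersection protocol strictly dominates it. -/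
def Optimal (O : Move kin kout → Move kin kout → Prop)
    (C : Ctx kin kout Mem Extra Msg) (P : Prot kin kout Mem Extra) : Prop :=
  ¬ ∃ P' : Prot kin kout Mem Extra,
      IsIntersectionProtocol O C P' ∧ StrictDominates C P' P

/-- `P` lexicographically dominates `P'`. -/
def LexDominates (C : Ctx kin kout Mem Extra Msg) (P P' : Prot kin kout Mem Extra) : Prop :=
  ∀ r ∈ Runs C P, ∀ r' ∈ Runs C P', r 0 = r' 0 →
    (∀ m, GOs r m = GOs r' m) ∨
    ∃ m, (∀ k < m, GOs r k = GOs r' k) ∧ GOs r m ≠ GOs r' m ∧ GOs r' m ⊂ GOs r m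

def StrictLexDominates (C : Ctx kin kout Mem Extra Msg) (P P' : Prot kin kout Mem Extra) :
    Prop :=
  LexDominates C P P' ∧ ¬ LexDominates C P' P

/-- `P` is lexicographically optimal: no intersection protocol strictly lexicographically
dominates it. -/
def LexOptimal (O : Move kin kout → Move kin kout → Prop)
    (C : Ctx kin kout Mem Extra Msg) (P : Prot kin kout Mem Extra) : Prop :=
  ¬ ∃ P' : Prot kin kout Mem Extra,
      IsIntersectionProtocol O C P' ∧ StrictLexDominates C P' P

/-- Knowledge: `K_i φ` holds at `(r,m)` iff `φ` holds at all points of the system where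
agent `i` has the same local state. -/
def Kn (S : Set (Run kin kout Mem Extra)) (i : ℕ)
    (φ : Run kin kout Mem Extra → ℕ → Prop) (r : Run kin kout Mem Extra) (m : ℕ) : Prop :=
  ∀ r' ∈ S, ∀ m', (r' m').2 i = (r m).2 i → φ r' m'

/-- The adversary model has no failures. -/
def NoFailures (C : Ctx kin kout Mem Extra Msg) : Prop :=
  ∀ α ∈ C.adv, ∀ k i, α.Ft k i = true ∧ α.Fr k i = true

/-- Full information exchange: every agent broadcasts (an injective encoding of) its
entire local state in every round, and records every broadcast it receives. -/
def FullInfo (C : Ctx kin kout Mem Extra Msg) : Prop :=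
  (∃ enc : LState kin kout Mem Extra → Msg, Function.Injective enc ∧
      ∀ i s a o, C.iep.msg i s a o = some (enc s)) ∧
  (∀ i s a, Function.Injective fun B : Set Msg => C.iep.upd i s a B)

/-- A sufficiently rich context: every agent that will be at the front of some lane
broadcasts a message encoding its lane and intent, tagged as coming from the front;
no other message is tagged as a front message; and each agent records the
(lane, intent) pair of each front agent it hears from. -/
def SufficientlyRich (C : Ctx kin kout Mem Extra Msg) : Prop :=
  ∃ dec : Msg → Option (Move kin kout),
    (∀ i s a (o : Reading kin kout × Extra) (l : Fin kin),
        o.1.front → o.1.lane = LaneStatus.inLane l →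
        ∃ msg, C.iep.msg i s a o = some msg ∧ dec msg = some (l, o.1.intent)) ∧
    (∀ i s a (o : Reading kin kout × Extra), ¬ o.1.front →
        ∀ msg, C.iep.msg i s a o = some msg → dec msg = none) ∧
    (∃ rec : Mem → Set (Move kin kout),
        ∀ i s a B, rec (C.iep.upd i s a B) = {mv | ∃ msg ∈ B, dec msg = some mv})

/-- The set of agents at the front of a queue. -/
def FrontSet (e : EnvState kin kout) : Set ℕ := {i | isFront e i}

/-- `P` depends only on the agents at the front of their queues. -/
def DependsOnlyOnFront (C : Ctx kin kout Mem Extra Msg) (P : Prot kin kout Mem Extra) :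
    Prop :=
  ∀ r ∈ Runs C P, ∀ r' ∈ Runs C P, ∀ m m' i,
    FrontSet (r m).1 = FrontSet (r' m').1 → P i ((r m).2 i) = P i ((r' m').2 i)

/-- The choices of an adversary in a single round: arrivals, the transmission
environment and the failure values. -/
structure Choice (kin kout : ℕ) where
  arrivals : Set (ℕ × Fin kin × Fin kout)
  T : Set ((Fin kin × ℕ) × (Fin kin × ℕ))
  Ft : ℕ → Bool
  Fr : ℕ → Bool

/-- The choices of adversary `α` in round `m+1`. -/
def choiceAt (α : Adversary kin kout) (m : ℕ) : Choice kin kout where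
  arrivals := {p | α.arrive p.1 = (m + 1, p.2.1, p.2.2)}
  T := α.T
  Ft := fun i => α.Ft m i
  Fr := fun i => α.Fr m i

/-- The adversary history `H(α,m) = ⟨α_0, …, α_{m-1}⟩`. -/
def hist (α : Adversary kin kout) (m : ℕ) : List (Choice kin kout) :=
  (List.range m).map (choiceAt α)

/-- The adversary history of run `r` up to time `m`. -/
def histOf (r : Run kin kout Mem Extra) (m : ℕ) : List (Choice kin kout) :=
  hist (r 0).1.adv m

/-- An intersection policy: a map from adversary histories to sets of permitted moves. -/
abbrev Policy (kin kout : ℕ) := List (Choice kin kout) → Set (Move kin kout)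

/-- The set `H_γ` of adversary histories of the context. -/
def Hists (C : Ctx kin kout Mem Extra Msg) : Set (List (Choice kin kout)) :=
  {h | ∃ α ∈ C.adv, ∃ m, h = hist α m}

/-- A feasible infinite sequence of histories: one arising from a single adversary. -/
def Feasible (F : Set (Adversary kin kout)) (h : ℕ → List (Choice kin kout)) : Prop :=
  ∃ α ∈ F, ∀ m, h m = hist α m

/-- Conflict-freedom of an intersection policy. -/
def ConflictFree (O : Move kin kout → Move kin kout → Prop)
    (C : Ctx kin kout Mem Extra Msg) (σ : Policy kin kout) : Prop :=
  ∀ h ∈ Hists C, ∀ mv ∈ σ h, ∀ mv' ∈ σ h, mv ≠ mv' → O mv mv'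

/-- Fairness of an intersection policy. -/
def FairPolicy (C : Ctx kin kout Mem Extra Msg) (σ : Policy kin kout) : Prop :=
  ∀ h : ℕ → List (Choice kin kout), Feasible C.adv h →
    ∀ mv : Move kin kout, ∀ m, ∃ m' ≥ m, mv ∈ σ (h m')

/-- A correct intersection policy: conflict-free and fair. -/
def CorrectPolicy (O : Move kin kout → Move kin kout → Prop)
    (C : Ctx kin kout Mem Extra Msg) (σ : Policy kin kout) : Prop :=
  ConflictFree O C σ ∧ FairPolicy C σ

/-- A synchronous context: the time is encoded in each agent's local state. -/
def Synchronous (C : Ctx kin kout Mem Extra Msg) : Prop :=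
  ∃ clock : LState kin kout Mem Extra → ℕ,
    ∀ P : Prot kin kout Mem Extra, ∀ r ∈ Runs C P, ∀ m i, clock ((r m).2 i) = m

/-- The knowledge condition of the knowledge-based program `P^σ`:
`front_i ∧ (lane_i, intent_i) ∈ σ`. -/
def phiSigma (σ : Policy kin kout) (i : ℕ) (r : Run kin kout Mem Extra) (m : ℕ) : Prop :=
  frontAt r m i ∧ ∃ mv, moveAt (r m).1 i = some mv ∧ mv ∈ σ (histOf r m)

/-- `P` implements the knowledge-based program `if K_i φ_i then go else noop` in `γ`. -/
def Implements (C : Ctx kin kout Mem Extra Msg) (P : Prot kin kout Mem Extra)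
    (φ : ℕ → Run kin kout Mem Extra → ℕ → Prop) : Prop :=
  ∀ r ∈ Runs C P, ∀ m i, (P i ((r m).2 i) = Act.go ↔ Kn (Runs C P) i (φ i) r m)

/-- Behavioral equivalence: the protocols take the same actions at all reachable states. -/
def BehEq (C : Ctx kin kout Mem Extra Msg) (P P' : Prot kin kout Mem Extra) : Prop :=
  (∀ r ∈ Runs C P, ∀ m i, P i ((r m).2 i) = P' i ((r m).2 i)) ∧
  (∀ r ∈ Runs C P', ∀ m i, P i ((r m).2 i) = P' i ((r m).2 i))

/-- `γ` is `σ`-aware. -/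
def SigmaAware (C : Ctx kin kout Mem Extra Msg) (σ : Policy kin kout) : Prop :=
  ∀ P : Prot kin kout Mem Extra, ∀ r ∈ Runs C P, ∀ m i (l : Fin kin) (l' : Fin kout),
    (l, l') ∈ σ (histOf r m) → i ∈ (r m).1.queue l →
    Kn (Runs C P) i (fun r' m' => (l, l') ∈ σ (histOf r' m')) r m

/-- `γ` is `next`-aware. -/
def NextAware (C : Ctx kin kout Mem Extra Msg)
    (next : List (Choice kin kout) → Fin kin) : Prop :=
  ∀ P : Prot kin kout Mem Extra, ∀ r ∈ Runs C P, ∀ m i (l : Fin kin),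
    next (histOf r m) = l →
    Kn (Runs C P) i (fun r' m' => next (histOf r' m') = l) r m

/-- Cyclic distance from `a` to `b` (mod `kin`). -/
def distC (a b : Fin kin) : ℕ := (b.val + kin - a.val) % kin

/-- `l` lies in the cyclic interval `[a, b)` of incoming lanes. -/
def inCyc (a b l : Fin kin) : Prop := distC a l < distC a b

/-- `mv` is compatible with every move in `S`. -/
def compatAll (O : Move kin kout → Move kin kout → Prop)
    (S : Set (Move kin kout)) (mv : Move kin kout) : Prop :=
  ∀ mv' ∈ S, O mv mv'

/-- The proposition `V_i` of the knowledge-based program `𝐏`. -/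
def Vprop (O : Move kin kout → Move kin kout → Prop) (σ : Policy kin kout)
    (next : List (Choice kin kout) → Fin kin) (i : ℕ)
    (r : Run kin kout Mem Extra) (m : ℕ) : Prop :=
  ∃ mv, moveAt (r m).1 i = some mv ∧ mv ∉ σ (histOf r m) ∧
    (∀ j mj, goingAt r m j → moveAt (r m).1 j = some mj →
        mj ∈ σ (histOf r m) → O mv mj) ∧
    (∀ j mj, j ≠ i → goingAt r m j → moveAt (r m).1 j = some mj →
        mj ∉ σ (histOf r m) → inCyc (next (histOf r m)) mv.1 mj.1 → O mv mj)

/-- The knowledge condition of the knowledge-based program `𝐏`: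
`front_i ∧ ((lane_i, intent_i) ∈ σ ∨ V_i)`. -/
def phiP (O : Move kin kout → Move kin kout → Prop) (σ : Policy kin kout)
    (next : List (Choice kin kout) → Fin kin) (i : ℕ)
    (r : Run kin kout Mem Extra) (m : ℕ) : Prop :=
  frontAt r m i ∧
    ((∃ mv, moveAt (r m).1 i = some mv ∧ mv ∈ σ (histOf r m)) ∨ Vprop O σ next i r m)

/-- Fairness of a `next` function. -/
def FairNext (C : Ctx kin kout Mem Extra Msg)
    (next : List (Choice kin kout) → Fin kin) : Prop :=
  ∀ h : ℕ → List (Choice kin kout), Feasible C.adv h →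
    ∀ m (l : Fin kin), ∃ m' ≥ m, next (h m') = l

/-- Fairness of a pair `(σ, next)`. -/
def PairFair (O : Move kin kout → Move kin kout → Prop)
    (C : Ctx kin kout Mem Extra Msg) (σ : Policy kin kout)
    (next : List (Choice kin kout) → Fin kin) : Prop :=
  ∀ h : ℕ → List (Choice kin kout), Feasible C.adv h →
    ∀ m (mv : Move kin kout), ∃ m' ≥ m,
      mv ∈ σ (h m') ∨ (next (h m') = mv.1 ∧ compatAll O (σ (h m')) mv)

/-- `next(h) = |h| mod |L_in|` at time `t`. -/
def nextL (hkin : 0 < kin) (t : ℕ) : Fin kin := ⟨t % kin, Nat.mod_lt _ hkin⟩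

/-- The stages of the construction of the set `Pos_i`, starting from the lane `nxt` and
proceeding in cyclic order; `M` is the set of moves received from front agents
(empty when there is no communication). -/
def posStage (hkin : 0 < kin) (O : Move kin kout → Move kin kout → Prop)
    (M : Set (Move kin kout)) (nxt : Fin kin) : ℕ → Set (Move kin kout)
  | 0 => ∅
  | t + 1 =>
    let S := posStage hkin O M nxt t
    let l : Fin kin := ⟨(nxt.val + t) % kin, Nat.mod_lt _ hkin⟩
    if ∃ l' : Fin kout, (l, l') ∈ M then
      S ∪ {mv | mv.1 = l ∧ mv ∈ M ∧ compatAll O S mv}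
    else
      S ∪ {mv | mv.1 = l ∧ compatAll O S mv}

/-- The set `Pos_i` computed from the received moves `M`, the lane `nxt = next` and the
agent's own lane `lanei`. -/
def PosSet (hkin : 0 < kin) (O : Move kin kout → Move kin kout → Prop)
    (M : Set (Move kin kout)) (nxt lanei : Fin kin) : Set (Move kin kout) :=
  posStage hkin O M nxt (distC nxt lanei)

/-- The stage `Pos_i^l` of the construction of `Pos_i`, for a lane `l` in the cyclic
interval `[nxt, lane_i)`. -/
def PosUpTo (hkin : 0 < kin) (O : Move kin kout → Move kin kout → Prop)
    (M : Set (Move kin kout)) (nxt l : Fin kin) : Set (Move kin kout) :=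
  posStage hkin O M nxt (distC nxt l + 1)

/-- The adversary model with no failures. -/
def NFadv (kin kout : ℕ) : Set (Adversary kin kout) :=
  {α | ∀ k i, α.Ft k i = true ∧ α.Fr k i = true}

/-- The adversary model with crash failures. -/
def CRadv (kin kout : ℕ) : Set (Adversary kin kout) :=
  {α | (∀ k i, α.Fr k i = true) ∧
    ∀ k i, α.Ft k i = false → ∀ k', k < k' → α.Ft k' i = false}

/-- The adversary model with sending omissions. -/
def SOadv (kin kout : ℕ) : Set (Adversary kin kout) :=
  {α | ∀ k i, α.Fr k i = true}

/-- The information-exchange protocol of `γ_∅`: a single memory state, no messages,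
and sensor readings `⟨front_i, lane_i, intent_i, time_i⟩`. -/
def E0 (kin kout : ℕ) : IEP kin kout Unit ℕ Empty where
  initMem _ := ()
  extra e _ := e.time
  msg _ _ _ _ := none
  upd _ _ _ _ := ()

/-- The context `γ_∅(F)`. -/
def gammaEmpty (kin kout : ℕ) (F : Set (Adversary kin kout)) : Ctx kin kout Unit ℕ Empty :=
  ⟨E0 kin kout, F⟩

/-- The protocol `P^∅`: go iff at the front and own move compatible with `Pos_i`. -/
def Pempty (hkin : 0 < kin) (O : Move kin kout → Move kin kout → Prop) :
    Prot kin kout Unit ℕ := fun _ s =>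
  match s.2.1.lane with
  | LaneStatus.inLane l =>
      if s.2.1.front ∧ compatAll O (PosSet hkin O ∅ (nextL hkin s.2.2) l) (l, s.2.1.intent)
      then Act.go else Act.noop
  | _ => Act.noop

/-- The information-exchange protocol of `γ_intent`: exactly the agents at the front of a
lane broadcast `(lane_i, intent_i)`; the memory is the set of moves received in the
current round; sensor readings are `⟨front_i, lane_i, intent_i, time_i⟩`. -/
def Eintent (kin kout : ℕ) : IEP kin kout (Set (Move kin kout)) ℕ (Move kin kout) where
  initMem _ := ∅
  extra e _ := e.time
  msg _ _ _ o :=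
    if o.1.front then
      match o.1.lane with
      | LaneStatus.inLane l => some (l, o.1.intent)
      | _ => none
    else none
  upd _ _ _ B := B

/-- The context `γ_intent(F)`. -/
def gammaIntent (kin kout : ℕ) (F : Set (Adversary kin kout)) :
    Ctx kin kout (Set (Move kin kout)) ℕ (Move kin kout) :=
  ⟨Eintent kin kout, F⟩

/-- The protocol `P^intent`: go iff at the front and own move compatible with `Pos_i`
computed from the received moves. -/
def Pintent (hkin : 0 < kin) (O : Move kin kout → Move kin kout → Prop) :
    Prot kin kout (Set (Move kin kout)) ℕ := fun _ s =>
  match s.2.1.lane with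
  | LaneStatus.inLane l =>
      if s.2.1.front ∧
          compatAll O (PosSet hkin O s.1 (nextL hkin s.2.2) l) (l, s.2.1.intent)
      then Act.go else Act.noop
  | _ => Act.noop


section Runs

variable {kin kout : ℕ} {Mem Extra Msg : Type*} {E : IEP kin kout Mem Extra Msg}
  {C : Ctx kin kout Mem Extra Msg} {P : Prot kin kout Mem Extra} {r : Run kin kout Mem Extra}

def dequeue (P : Prot kin kout Mem Extra) (g : GState kin kout Mem Extra) (w : Fin kin) :
    List ℕ :=
  match (g.1.queue w).head? with
  | some i => if P i (g.2 i) = Act.go then (g.1.queue w).tail else g.1.queue w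
  | none => g.1.queue w

lemma dequeue_sublist (g : GState kin kout Mem Extra) (w : Fin kin) :
    (dequeue P g w).Sublist (g.1.queue w) := by
  unfold dequeue
  split
  · split
    · exact List.tail_sublist _
    · exact List.Sublist.refl _
  · exact List.Sublist.refl _

lemma dequeue_of_go {g : GState kin kout Mem Extra} {w : Fin kin} {j : ℕ}
    (h : (g.1.queue w).head? = some j) (hgo : P j (g.2 j) = Act.go) :
    dequeue P g w = (g.1.queue w).tail := by
  simp only [dequeue, h, if_pos hgo]

lemma dequeue_of_not_go {g : GState kin kout Mem Extra} {w : Fin kin} {j : ℕ}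
    (h : (g.1.queue w).head? = some j) (hgo : P j (g.2 j) ≠ Act.go) :
    dequeue P g w = g.1.queue w := by
  simp only [dequeue, h, if_neg hgo]

lemma step_queue (g : GState kin kout Mem Extra) (w : Fin kin) :
    (step E P g).1.queue w =
      if h : ∃ i l', g.1.adv.arrive i = (g.1.time + 1, w, l') then
        dequeue P g w ++ [h.choose] else dequeue P g w := rfl

/-- Conflict-freeness makes the agent appended to a queue the unique one arriving there. -/
lemma step_queue_of_arrive {g : GState kin kout Mem Extra} {w : Fin kin} {s : ℕ}
    {v : Fin kout} (h : g.1.adv.arrive s = (g.1.time + 1, w, v)) :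
    (step E P g).1.queue w = dequeue P g w ++ [s] := by
  have hex : ∃ i l', g.1.adv.arrive i = (g.1.time + 1, w, l') := ⟨s, v, h⟩
  obtain ⟨v', hv'⟩ := hex.choose_spec
  have hchoose : hex.choose = s := by
    by_contra hne
    exact g.1.adv.conflictFree _ s hne (by rw [hv', h]) (by rw [hv', h])
  rw [step_queue, dif_pos hex, hchoose]

lemma step_queue_of_not_arrive {g : GState kin kout Mem Extra} {w : Fin kin}
    (h : ∀ s v, g.1.adv.arrive s ≠ (g.1.time + 1, w, v)) :
    (step E P g).1.queue w = dequeue P g w := by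
  rw [step_queue, dif_neg]
  rintro ⟨s, v, hs⟩
  exact h s v hs

lemma mem_step_queue {g : GState kin kout Mem Extra} {w : Fin kin} {s : ℕ}
    (hs : s ∈ (step E P g).1.queue w) :
    s ∈ dequeue P g w ∨
      (g.1.adv.arrive s).1 = g.1.time + 1 ∧ (g.1.adv.arrive s).2.1 = w := by
  rw [step_queue] at hs
  split_ifs at hs with h
  · rcases List.mem_append.1 hs with hs | hs
    · exact Or.inl hs
    · obtain ⟨v, hv⟩ := h.choose_spec
      rw [List.mem_singleton.1 hs, hv]
      exact Or.inr ⟨rfl, rfl⟩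
  · exact Or.inl hs

lemma run_adv (hr : r ∈ Runs C P) (n : ℕ) : (r n).1.adv = (r 0).1.adv := by
  induction n with
  | zero => rfl
  | succ n ih => rw [hr.2 n, ← ih]; rfl

lemma run_time (hr : r ∈ Runs C P) (n : ℕ) : (r n).1.time = n := by
  induction n with
  | zero => exact hr.1.2.1
  | succ n ih => rw [hr.2 n]; exact congrArg (· + 1) ih

lemma arrive_of_mem_queue (hr : r ∈ Runs C P) {n : ℕ} {w : Fin kin} {s : ℕ}
    (hs : s ∈ (r n).1.queue w) :
    ((r 0).1.adv.arrive s).2.1 = w ∧ ((r 0).1.adv.arrive s).1 ≤ n := by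
  induction n generalizing w s with
  | zero => simp [hr.1.2.2.1 w] at hs
  | succ n ih =>
    rw [hr.2 n] at hs
    rcases mem_step_queue hs with hs | ⟨htime, hlane⟩
    · obtain ⟨hlane, htime⟩ := ih ((dequeue_sublist _ w).subset hs)
      exact ⟨hlane, by omega⟩
    · rw [run_adv hr, run_time hr] at htime
      rw [run_adv hr] at hlane
      exact ⟨hlane, htime.le⟩

lemma queue_nodup (hr : r ∈ Runs C P) (n : ℕ) (w : Fin kin) : ((r n).1.queue w).Nodup := by
  induction n with
  | zero => simp [hr.1.2.2.1 w]
  | succ n ih =>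
    have hdeq : (dequeue P (r n) w).Nodup := (dequeue_sublist _ w).nodup ih
    rw [hr.2 n, step_queue]
    split_ifs with h
    · refine List.nodup_append.2 ⟨hdeq, List.nodup_singleton _, ?_⟩
      intro s hs t ht hst
      rw [List.mem_singleton.1 ht] at hst
      subst hst
      obtain ⟨v, hv⟩ := h.choose_spec
      have hold := (arrive_of_mem_queue hr ((dequeue_sublist _ w).subset hs)).2
      rw [← run_adv hr n, hv, run_time hr] at hold
      omega
    · exact hdeq

lemma lane_eq_of_mem_queue (hr : r ∈ Runs C P) {n : ℕ} {w w' : Fin kin} {s : ℕ}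
    (h : s ∈ (r n).1.queue w) (h' : s ∈ (r n).1.queue w') : w = w' :=
  (arrive_of_mem_queue hr h).1.symm.trans (arrive_of_mem_queue hr h').1

lemma head_eq_of_isFront (hr : r ∈ Runs C P) {n : ℕ} {w : Fin kin} {s : ℕ}
    (hfr : isFront (r n).1 s) (hs : s ∈ (r n).1.queue w) :
    ((r n).1.queue w).head? = some s := by
  obtain ⟨w', hw'⟩ := hfr
  rwa [← lane_eq_of_mem_queue hr (List.mem_of_mem_head? hw') hs]

lemma posAt_of_head (hr : r ∈ Runs C P) {n : ℕ} {w : Fin kin} {s : ℕ}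
    (h : ((r n).1.queue w).head? = some s) : posAt (r n).1 s = some (w, 0) := by
  have hs := List.mem_of_mem_head? h
  have hex : ∃ l, s ∈ (r n).1.queue l := ⟨w, hs⟩
  obtain ⟨t, ht⟩ := List.head?_eq_some_iff.1 h
  rw [posAt, dif_pos hex, lane_eq_of_mem_queue hr hex.choose_spec hs, ht]
  simp

lemma minimalReading_of_head (hr : r ∈ Runs C P) {n : ℕ} {w : Fin kin} {s : ℕ}
    (h : ((r n).1.queue w).head? = some s) :
    minimalReading (r n).1 s = ⟨True, .inLane w, intentOf (r n).1 s⟩ := by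
  have hs := List.mem_of_mem_head? h
  have hex : ∃ l, s ∈ (r n).1.queue l := ⟨w, hs⟩
  simp only [minimalReading, dif_pos hex, lane_eq_of_mem_queue hr hex.choose_spec hs]
  exact congrArg (Reading.mk · _ _) (eq_true ⟨w, h⟩)

lemma not_isFront_succ_of_go (hr : r ∈ Runs C P) {n : ℕ} {w : Fin kin} {j : ℕ}
    (h : ((r n).1.queue w).head? = some j) (hgo : P j ((r n).2 j) = Act.go) :
    ¬ isFront (r (n + 1)).1 j := by
  rintro ⟨w', hw'⟩
  have hj := List.mem_of_mem_head? hw'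
  rw [hr.2 n] at hj
  rcases mem_step_queue hj with hj | ⟨htime, -⟩
  · have hw : w' = w := lane_eq_of_mem_queue hr ((dequeue_sublist _ w').subset hj)
      (List.mem_of_mem_head? h)
    obtain ⟨t, ht⟩ := List.head?_eq_some_iff.1 h
    have hnd := queue_nodup hr n w
    rw [hw, dequeue_of_go h hgo, ht] at hj
    rw [ht] at hnd
    exact (List.nodup_cons.1 hnd).1 hj
  · have hold := (arrive_of_mem_queue hr (List.mem_of_mem_head? h)).2
    rw [← run_adv hr n, htime, run_time hr] at hold
    omega

lemma head_succ_of_not_go (hr : r ∈ Runs C P) {n : ℕ} {w : Fin kin} {j : ℕ}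
    (h : ((r n).1.queue w).head? = some j) (hgo : P j ((r n).2 j) ≠ Act.go) :
    ((r (n + 1)).1.queue w).head? = some j := by
  rw [hr.2 n, step_queue, dequeue_of_not_go h hgo]
  split_ifs <;> simp [h]

lemma goingAt_iff (hr : r ∈ Runs C P) {n : ℕ} {w : Fin kin} {j : ℕ}
    (h : ((r n).1.queue w).head? = some j) :
    goingAt r n j ↔ P j ((r n).2 j) = Act.go :=
  ⟨fun hgoing => by_contra fun hgo => hgoing.2 ⟨w, head_succ_of_not_go hr h hgo⟩,
    fun hgo => ⟨⟨w, h⟩, not_isFront_succ_of_go hr h hgo⟩⟩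

end Runs

section Pos

variable {kin kout : ℕ} (hkin : 0 < kin) (O : Move kin kout → Move kin kout → Prop)
  (M : Set (Move kin kout)) (nxt : Fin kin)

/-- The `t`-th lane visited by `posStage`. -/
def cycLane (t : ℕ) : Fin kin := ⟨(nxt.val + t) % kin, Nat.mod_lt _ hkin⟩

lemma distC_lt (a b : Fin kin) : distC a b < kin := Nat.mod_lt _ (a.pos)

lemma distC_self (a : Fin kin) : distC a a = 0 := by
  simp [distC]

lemma cycLane_distC (l : Fin kin) : cycLane hkin nxt (distC nxt l) = l := by
  ext
  simp only [cycLane, distC, Nat.add_mod_mod]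
  rw [show nxt.val + (l.val + kin - nxt.val) = l.val + kin by omega, Nat.add_mod_right,
    Nat.mod_eq_of_lt l.isLt]

lemma cycLane_injective {s t : ℕ} (hs : s < kin) (ht : t < kin)
    (h : cycLane hkin nxt s = cycLane hkin nxt t) : s = t := by
  have h' : nxt.val + s ≡ nxt.val + t [MOD kin] := congrArg Fin.val h
  simpa [Nat.ModEq, Nat.mod_eq_of_lt hs, Nat.mod_eq_of_lt ht] using
    Nat.ModEq.add_left_cancel' nxt.val h'

lemma ne_of_inCyc {a b l : Fin kin} (h : inCyc a b l) : l ≠ b := by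
  rintro rfl
  exact lt_irrefl _ h

variable {hkin O M nxt}

lemma mem_posStage_succ {t : ℕ} {mv : Move kin kout} :
    mv ∈ posStage hkin O M nxt (t + 1) ↔ mv ∈ posStage hkin O M nxt t ∨
      (mv.1 = cycLane hkin nxt t ∧ compatAll O (posStage hkin O M nxt t) mv ∧
        ((∃ v, (mv.1, v) ∈ M) → mv ∈ M)) := by
  obtain ⟨w, v⟩ := mv
  simp only [posStage, cycLane]
  split_ifs <;> simp only [Set.mem_union, Set.mem_ofPred_eq] <;> grind

lemma lane_of_mem_posStage {t : ℕ} {mv : Move kin kout} (h : mv ∈ posStage hkin O M nxt t) :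
    ∃ s < t, mv.1 = cycLane hkin nxt s := by
  induction t with
  | zero => exact absurd h (Set.notMem_empty mv)
  | succ t ih =>
    rcases mem_posStage_succ.1 h with h | ⟨hl, -⟩
    · obtain ⟨s, hs, hl⟩ := ih h
      exact ⟨s, by omega, hl⟩
    · exact ⟨t, by omega, hl⟩

lemma mem_posStage_iff {t T : ℕ} (hT : T ≤ kin) (ht : t < T) {mv : Move kin kout}
    (hmv : mv.1 = cycLane hkin nxt t) :
    mv ∈ posStage hkin O M nxt T ↔
      compatAll O (posStage hkin O M nxt t) mv ∧ ((∃ v, (mv.1, v) ∈ M) → mv ∈ M) := by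
  induction T with
  | zero => omega
  | succ T ih =>
    rw [mem_posStage_succ]
    rcases Nat.lt_succ_iff_lt_or_eq.1 ht with ht | rfl
    · have hne : mv.1 ≠ cycLane hkin nxt T := fun h =>
        ht.ne (cycLane_injective hkin nxt (by omega) (by omega) (hmv.symm.trans h))
      simp only [hne, false_and, or_false]
      exact ih (by omega) ht
    · have hnotin : mv ∉ posStage hkin O M nxt t := fun h => by
        obtain ⟨s, hs, hl⟩ := lane_of_mem_posStage h
        exact hs.ne (cycLane_injective hkin nxt (by omega) (by omega) (hl.symm.trans hmv))
      simp only [hnotin, hmv, true_and, false_or]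

/-- For a lane `l` that `Pos_i` visits before `lane_i`, the stage of `Pos_i` preceding `l` is
exactly the set `Pos_j` computed from the same messages by an agent `j` in lane `l`. -/
lemma mem_PosSet_iff {li l : Fin kin} {l' : Fin kout} (hl : inCyc nxt li l) :
    (l, l') ∈ PosSet hkin O M nxt li ↔
      compatAll O (PosSet hkin O M nxt l) (l, l') ∧ ((∃ v, (l, v) ∈ M) → (l, l') ∈ M) :=
  mem_posStage_iff (distC_lt _ _).le hl (cycLane_distC hkin nxt l).symm

end Pos

section Intent

variable {kin kout : ℕ} {F : Set (Adversary kin kout)}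
  {P : Prot kin kout (Set (Move kin kout)) ℕ} {r : Run kin kout (Set (Move kin kout)) ℕ}

/-- `e.adv.Ft k` governs the transmissions of round `k + 1`, the round that ends in `e`. -/
def heardMoves (e : EnvState kin kout) (k : ℕ) : Set (Move kin kout) :=
  {mv | ∃ t, (e.queue mv.1).head? = some t ∧ intentOf e t = mv.2 ∧ e.adv.Ft k t = true}

lemma eq_of_mem_heardMoves {e : EnvState kin kout} {k t : ℕ} {w : Fin kin} {v : Fin kout}
    (hv : (w, v) ∈ heardMoves e k) (ht : (e.queue w).head? = some t) : v = intentOf e t := by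
  obtain ⟨t', ht', hint, -⟩ := hv
  exact hint.symm.trans (congrArg _ (Option.some.inj (ht'.symm.trans ht)))

lemma localState_eq (hr : r ∈ Runs (gammaIntent kin kout F) P) (n s : ℕ) :
    (r n).2 s = (((r n).2 s).1, minimalReading (r n).1 s, n) := by
  cases n with
  | zero =>
    obtain ⟨-, htime, -, -, hinit⟩ := hr.1
    rw [hinit s]
    exact congrArg (fun t => (_, _, t)) htime
  | succ n =>
    have htime := run_time hr (n + 1)
    rw [hr.2 n] at htime ⊢
    exact congrArg (fun t => (_, _, t)) htime

lemma localState_eq_of_head (hr : r ∈ Runs (gammaIntent kin kout F) P) {n : ℕ}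
    {w : Fin kin} {s : ℕ} (h : ((r n).1.queue w).head? = some s) :
    (r n).2 s = (((r n).2 s).1, ⟨True, .inLane w, intentOf (r n).1 s⟩, n) := by
  rw [← minimalReading_of_head hr h]
  exact localState_eq hr n s

lemma Eintent_msg_of_head (hr : r ∈ Runs (gammaIntent kin kout F) P) {n : ℕ} {w : Fin kin}
    {t : ℕ} (h : ((r n).1.queue w).head? = some t) (x : LState kin kout (Set (Move kin kout)) ℕ)
    (a : Act) (y : ℕ) :
    (Eintent kin kout).msg t x a (minimalReading (r n).1 t, y) = some (w, intentOf (r n).1 t) := by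
  simp [Eintent, minimalReading_of_head hr h]

lemma Eintent_msg_of_not_isFront {e : EnvState kin kout} {t : ℕ} (h : ¬ isFront e t)
    (x : LState kin kout (Set (Move kin kout)) ℕ) (a : Act) (y : ℕ) :
    (Eintent kin kout).msg t x a (minimalReading e t, y) = none := by
  simp [Eintent, minimalReading, h]

lemma memory_succ (hr : r ∈ Runs (gammaIntent kin kout F) P) (n s : ℕ) :
    ((r (n + 1)).2 s).1 =
      if (r n).1.adv.Fr (r n).1.time s = true ∧ (posAt (r (n + 1)).1 s).isSome = true then
        {mv | ∃ t pt ps,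
          (Eintent kin kout).msg t ((r n).2 t) (P t ((r n).2 t))
            (minimalReading (r (n + 1)).1 t, (r (n + 1)).1.time) = some mv ∧
          (r n).1.adv.Ft (r n).1.time t = true ∧ posAt (r (n + 1)).1 t = some pt ∧
          posAt (r (n + 1)).1 s = some ps ∧ (pt, ps) ∈ (r n).1.adv.T}
      else ∅ := by
  rw [hr.2 n]
  rfl

/-- `T_front` lets every front agent reach every other one. -/
lemma memory_eq_heardMoves (hr : r ∈ Runs (gammaIntent kin kout F) P) {n s : ℕ}
    (hFr : (r 0).1.adv.Fr n s = true) (hs : isFront (r (n + 1)).1 s) :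
    ((r (n + 1)).2 s).1 = heardMoves (r (n + 1)).1 n := by
  obtain ⟨ws, hws⟩ := hs
  have hFr' : (r n).1.adv.Fr (r n).1.time s = true := by rwa [run_adv hr, run_time hr]
  rw [memory_succ hr, if_pos ⟨hFr', by rw [posAt_of_head hr hws]; rfl⟩]
  ext ⟨w, v⟩
  simp only [heardMoves, run_adv hr, run_time hr, Set.mem_ofPred_eq]
  constructor
  · rintro ⟨t, -, -, hmsg, hft, -⟩
    by_cases hfront : isFront (r (n + 1)).1 t
    · obtain ⟨w', hw'⟩ := hfront
      rw [Eintent_msg_of_head hr hw', Option.some_inj, Prod.mk.injEq] at hmsg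
      obtain ⟨rfl, rfl⟩ := hmsg
      exact ⟨t, hw', rfl, hft⟩
    · rw [Eintent_msg_of_not_isFront hfront] at hmsg
      exact absurd hmsg nofun
  · rintro ⟨t, ht, rfl, hft⟩
    refine ⟨t, (w, 0), (ws, 0), Eintent_msg_of_head hr ht _ _ _, hft, posAt_of_head hr ht,
      posAt_of_head hr hws, ?_⟩
    rw [← run_adv hr n]
    exact (r n).1.adv.T_front w ws

lemma Pintent_eq_go_iff {hkin : 0 < kin} {O : Move kin kout → Move kin kout → Prop}
    (hr : r ∈ Runs (gammaIntent kin kout F) P) {n : ℕ} {w : Fin kin} {j : ℕ}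
    (h : ((r n).1.queue w).head? = some j) :
    Pintent hkin O j ((r n).2 j) = Act.go ↔
      compatAll O (PosSet hkin O ((r n).2 j).1 (nextL hkin n) w) (w, intentOf (r n).1 j) := by
  conv_lhs => rw [localState_eq_of_head hr h]
  simp [Pintent]

end Intent

section Witness

variable {kin kout : ℕ} {Mem Extra Msg : Type*}

def initState (E : IEP kin kout Mem Extra Msg) (α : Adversary kin kout) :
    GState kin kout Mem Extra :=
  let e : EnvState kin kout := ⟨α, 0, fun _ => [], ∅⟩
  (e, fun s => (E.initMem s, minimalReading e s, E.extra e s))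

def runOf (C : Ctx kin kout Mem Extra Msg) (P : Prot kin kout Mem Extra)
    (α : Adversary kin kout) : Run kin kout Mem Extra :=
  fun n => (step C.iep P)^[n] (initState C.iep α)

lemma runOf_mem {C : Ctx kin kout Mem Extra Msg} {P : Prot kin kout Mem Extra}
    {α : Adversary kin kout} (hα : α ∈ C.adv) : runOf C P α ∈ Runs C P :=
  ⟨⟨hα, rfl, fun _ => rfl, rfl, fun _ => rfl⟩, fun n => Function.iterate_succ_apply' _ n _⟩

variable (hkin : 0 < kin) (n i : ℕ) (li : Fin kin) (f : Fin kin → Fin kout)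
  (M : Set (Move kin kout))

/-- Agent `i + distC li w` arrives in lane `w` in round `n + 1`, with intent `f w`; every other
agent arrives later. -/
def witnessArrive (s : ℕ) : ℕ × Fin kin × Fin kout :=
  if i ≤ s ∧ s < i + kin then (n + 1, cycLane hkin li (s - i), f (cycLane hkin li (s - i)))
  else (n + 2 + s, li, f li)

lemma witnessArrive_agent (w : Fin kin) :
    witnessArrive hkin n i li f (i + distC li w) = (n + 1, w, f w) := by
  have := distC_lt li w
  rw [witnessArrive, if_pos ⟨by omega, by omega⟩, Nat.add_sub_cancel_left, cycLane_distC]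

lemma le_witnessArrive_fst (s : ℕ) : n + 1 ≤ (witnessArrive hkin n i li f s).1 := by
  unfold witnessArrive
  split_ifs <;> dsimp only <;> omega

def witnessAdv : Adversary kin kout where
  arrive := witnessArrive hkin n i li f
  conflictFree := by
    intro s t hst htime hlane
    unfold witnessArrive at htime hlane
    split_ifs at htime hlane with hs ht ht
    · exact hst (by have := cycLane_injective hkin li (by omega) (by omega) hlane; omega)
    all_goals simp only at htime; omega
  T := Set.univ
  T_front _ _ := trivial
  Ft _ s := decide ((witnessArrive hkin n i li f s).2 ∈ M)
  Fr _ _ := true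

lemma witnessAdv_mem {F : Set (Adversary kin kout)}
    (hF : F ∈ ({CRadv kin kout, SOadv kin kout} : Set (Set (Adversary kin kout)))) :
    witnessAdv hkin n i li f M ∈ F := by
  rcases hF with rfl | rfl
  · exact ⟨fun _ _ => rfl, fun _ _ h _ _ => h⟩
  · exact fun _ _ => rfl

variable {hkin n i li f M} {F : Set (Adversary kin kout)}
  {P : Prot kin kout (Set (Move kin kout)) ℕ}

local notation "rW" => runOf (gammaIntent kin kout F) P (witnessAdv hkin n i li f M)

lemma witness_mem (hα : witnessAdv hkin n i li f M ∈ F) :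
    rW ∈ Runs (gammaIntent kin kout F) P :=
  runOf_mem hα

lemma witness_queue_of_le (hα : witnessAdv hkin n i li f M ∈ F) {k : ℕ} (hk : k ≤ n)
    (w : Fin kin) : (rW k).1.queue w = [] := by
  induction k with
  | zero => rfl
  | succ k ih =>
    have hr := witness_mem (P := P) hα
    rw [hr.2 k, step_queue_of_not_arrive, dequeue, ih (by omega)]
    · rfl
    intro s v hs
    have := le_witnessArrive_fst hkin n i li f s
    rw [run_adv hr, run_time hr] at hs
    rw [show witnessArrive hkin n i li f s = _ from hs] at this
    omega

lemma witness_head (hα : witnessAdv hkin n i li f M ∈ F) (w : Fin kin) :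
    ((rW (n + 1)).1.queue w).head? = some (i + distC li w) := by
  have hr := witness_mem (P := P) hα
  rw [hr.2 n, step_queue_of_arrive (s := i + distC li w) (v := f w), dequeue,
    witness_queue_of_le hα le_rfl w]
  · rfl
  rw [run_adv hr, run_time hr]
  exact witnessArrive_agent hkin n i li f w

lemma witness_intentOf (hα : witnessAdv hkin n i li f M ∈ F) (k : ℕ) (w : Fin kin) :
    intentOf (rW k).1 (i + distC li w) = f w := by
  rw [intentOf, run_adv (witness_mem hα)]
  exact congrArg (·.2.2) (witnessArrive_agent hkin n i li f w)

lemma witness_heardMoves (hα : witnessAdv hkin n i li f M ∈ F)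
    (hf : ∀ w v, (w, v) ∈ M → f w = v) : heardMoves (rW (n + 1)).1 n = M := by
  ext ⟨w, v⟩
  have hFt : (rW (n + 1)).1.adv.Ft n (i + distC li w) = decide ((w, f w) ∈ M) := by
    rw [run_adv (witness_mem hα)]
    exact congrArg (fun a : ℕ × Fin kin × Fin kout => decide (a.2 ∈ M))
      (witnessArrive_agent hkin n i li f w)
  simp only [heardMoves, Set.mem_ofPred_eq, witness_head hα, Option.some_inj]
  constructor
  · rintro ⟨_, rfl, hint, hft⟩
    rw [hFt, decide_eq_true_iff] at hft
    rw [witness_intentOf hα] at hint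
    rwa [← hint]
  · intro hv
    refine ⟨_, rfl, (witness_intentOf hα _ w).trans (hf w v hv), ?_⟩
    rw [hFt, decide_eq_true_iff, hf w v hv]
    exact hv

end Witness

section Knowledge

variable {kin kout : ℕ} {hkin : 0 < kin} {O : Move kin kout → Move kin kout → Prop}
  {F : Set (Adversary kin kout)} {r : Run kin kout (Set (Move kin kout)) ℕ}

lemma histOf_length {Mem Extra : Type*} (r : Run kin kout Mem Extra) (m : ℕ) :
    (histOf r m).length = m := by
  simp [histOf, hist]

lemma Fr_eq_true_of_mem
    (hF : F ∈ ({CRadv kin kout, SOadv kin kout} : Set (Set (Adversary kin kout))))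
    {α : Adversary kin kout} (hα : α ∈ F) (k s : ℕ) : α.Fr k s = true := by
  rcases hF with rfl | rfl
  exacts [hα.1 k s, hα k s]

lemma eq_and_isFront_iff_of_localState_eq {P : Prot kin kout (Set (Move kin kout)) ℕ}
    {r' : Run kin kout (Set (Move kin kout)) ℕ} (hr : r ∈ Runs (gammaIntent kin kout F) P)
    (hr' : r' ∈ Runs (gammaIntent kin kout F) P) {m m' i : ℕ} (h : (r' m').2 i = (r m).2 i) :
    m' = m ∧ (isFront (r' m').1 i ↔ isFront (r m).1 i) := by
  rw [localState_eq hr', localState_eq hr] at h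
  simp only [Prod.mk.injEq] at h
  exact ⟨h.2.2, Iff.of_eq (congrArg Reading.front h.2.1)⟩

lemma compatAll_of_goingAt
    (hF : F ∈ ({CRadv kin kout, SOadv kin kout} : Set (Set (Adversary kin kout))))
    (hr : r ∈ Runs (gammaIntent kin kout F) (Pintent hkin O)) {n i j : ℕ} {l : Fin kin}
    (hi : isFront (r (n + 1)).1 i) (hj : ((r (n + 1)).1.queue l).head? = some j)
    (hgo : goingAt r (n + 1) j) :
    compatAll O (PosSet hkin O ((r (n + 1)).2 i).1 (nextL hkin (n + 1)) l)
        (l, intentOf (r (n + 1)).1 j) ∧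
      ((∃ v, (l, v) ∈ ((r (n + 1)).2 i).1) →
        (l, intentOf (r (n + 1)).1 j) ∈ ((r (n + 1)).2 i).1) := by
  have hM := memory_eq_heardMoves hr (Fr_eq_true_of_mem hF hr.1.1 n i) hi
  refine ⟨?_, ?_⟩
  · rw [hM, ← memory_eq_heardMoves hr (Fr_eq_true_of_mem hF hr.1.1 n j) ⟨l, hj⟩]
    exact (Pintent_eq_go_iff hr hj).1 ((goingAt_iff hr hj).1 hgo)
  · rintro ⟨v, hv⟩
    rw [hM] at hv ⊢
    rwa [← eq_of_mem_heardMoves hv hj]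

lemma exists_intents_of_heardMoves {e : EnvState kin kout} {k i : ℕ} {li l : Fin kin}
    {l' : Fin kout} (hi : (e.queue li).head? = some i) (hl : l ≠ li)
    (hcons : (∃ v, (l, v) ∈ heardMoves e k) → (l, l') ∈ heardMoves e k) :
    ∃ f : Fin kin → Fin kout, (∀ w v, (w, v) ∈ heardMoves e k → f w = v) ∧
      f li = intentOf e i ∧ f l = l' := by
  refine ⟨Function.update (fun w => ((e.queue w).head?.map (intentOf e)).getD l') l l',
    fun w v hv => ?_, by simp [hl.symm, hi], by simp⟩
  obtain ⟨t, ht, -⟩ := id hv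
  rw [eq_of_mem_heardMoves hv ht]
  by_cases hw : w = l
  · subst hw
    rw [← eq_of_mem_heardMoves (hcons ⟨v, hv⟩) ht]
    simp
  · simp [hw, ht]

/-- The witness run delivers in round `n + 1` exactly the messages `i` received, and puts in
lane `l` an agent with move `(l, l')`; that agent hears what `i` heard, so it goes. -/
lemma exists_run_goingAt
    (hF : F ∈ ({CRadv kin kout, SOadv kin kout} : Set (Set (Adversary kin kout))))
    (hr : r ∈ Runs (gammaIntent kin kout F) (Pintent hkin O)) {n i : ℕ} {li l : Fin kin}
    {l' : Fin kout} (hi : ((r (n + 1)).1.queue li).head? = some i) (hl : l ≠ li)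
    (hcomp : compatAll O (PosSet hkin O ((r (n + 1)).2 i).1 (nextL hkin (n + 1)) l) (l, l'))
    (hcons : (∃ v, (l, v) ∈ ((r (n + 1)).2 i).1) → (l, l') ∈ ((r (n + 1)).2 i).1) :
    ∃ r' ∈ Runs (gammaIntent kin kout F) (Pintent hkin O),
      (r' (n + 1)).2 i = (r (n + 1)).2 i ∧
      ∃ j, frontAt r' (n + 1) j ∧ j ∈ (r' (n + 1)).1.queue l ∧
        intentOf (r' (n + 1)).1 j = l' ∧ goingAt r' (n + 1) j := by
  set M := ((r (n + 1)).2 i).1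
  have hM : M = heardMoves (r (n + 1)).1 n :=
    memory_eq_heardMoves hr (Fr_eq_true_of_mem hF hr.1.1 n i) ⟨li, hi⟩
  rw [hM] at hcons
  obtain ⟨f, hf, hfli, hfl⟩ := exists_intents_of_heardMoves hi hl hcons
  rw [← hM] at hf
  have hα := witnessAdv_mem hkin n i li f M hF
  set r' := runOf (gammaIntent kin kout F) (Pintent hkin O) (witnessAdv hkin n i li f M)
  have hr' : r' ∈ Runs (gammaIntent kin kout F) (Pintent hkin O) := witness_mem hα
  have hM' : ∀ s, isFront (r' (n + 1)).1 s → ((r' (n + 1)).2 s).1 = M := fun s hs =>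
    (memory_eq_heardMoves hr' (Fr_eq_true_of_mem hF hα n s) hs).trans (witness_heardMoves hα hf)
  have hli := witness_head (P := Pintent hkin O) hα li
  have hinti := witness_intentOf (P := Pintent hkin O) hα (n + 1) li
  rw [distC_self, add_zero] at hli hinti
  have hlj := witness_head (P := Pintent hkin O) hα l
  have hintj : intentOf (r' (n + 1)).1 (i + distC li l) = l' :=
    (witness_intentOf hα _ l).trans hfl
  refine ⟨r', hr', ?_, _, ⟨l, hlj⟩, List.mem_of_mem_head? hlj, hintj, ?_⟩
  · rw [localState_eq_of_head hr' hli, localState_eq_of_head hr hi, hM' i ⟨li, hli⟩, hinti,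
      hfli]
  · rw [goingAt_iff hr' hlj, Pintent_eq_go_iff hr' hlj, hM' _ ⟨l, hlj⟩, hintj]
    exact hcomp

end Knowledge

end Inter

open Inter

theorem Pintent_Pos_characterization_general
    {kin kout : ℕ} (hkin : 0 < kin)
    (O : Move kin kout → Move kin kout → Prop)
    (F : Set (Adversary kin kout))
    (hF : F ∈ ({CRadv kin kout, SOadv kin kout} : Set (Set (Adversary kin kout))))
    (r : Run kin kout (Set (Move kin kout)) ℕ)
    (hr : r ∈ Runs (gammaIntent kin kout F) (Pintent hkin O)) (m : ℕ)
    (i : ℕ) (li : Fin kin)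
    (hi : ((r m).1.queue li).head? = some i)
    (l : Fin kin) (l' : Fin kout)
    (hl : inCyc (nextL hkin (histOf r m).length) li l) :
    (l, l') ∈ PosSet hkin O ((r m).2 i).1 (nextL hkin (histOf r m).length) li ↔
      ¬ Kn (Runs (gammaIntent kin kout F) (Pintent hkin O)) i
          (fun r' m' => ¬ ∃ j : ℕ, frontAt r' m' j ∧ j ∈ (r' m').1.queue l ∧
            intentOf (r' m').1 j = l' ∧ goingAt r' m' j) r m := by
  obtain ⟨n, rfl⟩ : ∃ n, m = n + 1 :=
    Nat.exists_eq_succ_of_ne_zero fun h0 => by simp [h0, hr.1.2.2.1 li] at hi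
  rw [histOf_length] at hl ⊢
  rw [mem_PosSet_iff hl]
  constructor
  · rintro ⟨hcomp, hcons⟩ hK
    obtain ⟨r', hr', hst, j, hj⟩ := exists_run_goingAt hF hr hi (ne_of_inCyc hl) hcomp hcons
    exact hK r' hr' (n + 1) hst ⟨j, hj⟩
  · intro hnK
    by_contra hnot
    refine hnK fun r' hr' m' hst ⟨j, hfront, hjl, hint, hgo⟩ => hnot ?_
    obtain ⟨rfl, hfront_i⟩ := eq_and_isFront_iff_of_localState_eq hr hr' hst
    rw [← hst, ← hint]
    exact compatAll_of_goingAt hF hr' (hfront_i.2 ⟨li, hi⟩)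
      (head_eq_of_isFront hr' hfront hjl) hgo

/-- For `F ∈ {CR, SO}`, at a point `(r,m)` of the system of `P^intent`
in `γ_intent(F)` where agent `i` is at the front of lane `li`, a move `(l,l')` with
`l ∈ [next(r,m), li)` is in `Pos_i(r,m)` iff `i` considers it possible that some agent
`j` at the front of lane `l` with intent `l'` is going. -/
theorem Pintent_Pos_characterization
    {kin kout : ℕ} (hkin : 0 < kin)
    (O : Move kin kout → Move kin kout → Prop)
    (hO : ∀ a b, O a b → O b a)
    (F : Set (Adversary kin kout))
    (hF : F ∈ ({CRadv kin kout, SOadv kin kout} : Set (Set (Adversary kin kout))))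
    (r : Run kin kout (Set (Move kin kout)) ℕ)
    (hr : r ∈ Runs (gammaIntent kin kout F) (Pintent hkin O)) (m : ℕ)
    (i : ℕ) (li : Fin kin)
    (hi : ((r m).1.queue li).head? = some i)
    (l : Fin kin) (l' : Fin kout)
    (hl : inCyc (nextL hkin (histOf r m).length) li l) :
    (l, l') ∈ PosSet hkin O ((r m).2 i).1 (nextL hkin (histOf r m).length) li ↔
      ¬ Kn (Runs (gammaIntent kin kout F) (Pintent hkin O)) i
          (fun r' m' => ¬ ∃ j : ℕ, frontAt r' m' j ∧ j ∈ (r' m').1.queue l ∧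
            intentOf (r' m').1 j = l' ∧ goingAt r' m' j) r m :=
  Pintent_Pos_characterization_general hkin O F hF r hr m i li hi l l' hl
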